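/- Let M, N : ℕ → ℝ be weight sequences in the class LC with M ≈ N, and suppose the associated weight function ω_M satisfies (α0), i.e. there exist C, D ≥ 1 with ω_M(λ·t) ≤ C·λ·ω_M(t) + D·λ for all λ ≥ 1 and t ≥ 0. Then: (i) ω_N also satisfies (α0); and (ii) ω_M and ω_N are equivalent weight functions, i.e. ω_M(t) = O(ω_N(t)) and ω_N(t) = O(ω_M(t)) as t → +∞. -/

import Mathlib

open Filter Real Asymptotics

/-- The associated weight function of a weight sequence `M`. -/
noncomputable def omegaM (M : ℕ → ℝ) (t : ℝ) : ℝ :=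
  if t = 0 then 0 else ⨆ p : ℕ, Real.log (t ^ p / M p)

/-- The class `LC`: positive, normalized, log-convex weight sequences whose
`p`-th roots tend to infinity. -/
def IsLC (M : ℕ → ℝ) : Prop :=
  (∀ p, 0 < M p) ∧ M 0 = 1 ∧ M 0 ≤ M 1 ∧
  (∀ p : ℕ, 1 ≤ p → (M p) ^ 2 ≤ M (p - 1) * M (p + 1)) ∧
  Filter.Tendsto (fun p : ℕ => (M p) ^ (1 / (p : ℝ))) Filter.atTop Filter.atTop

/-- The quotient sequence `μ_0 = 1`, `μ_p = M_p / M_{p-1}`. -/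
noncomputable def mu (M : ℕ → ℝ) (p : ℕ) : ℝ :=
  if p = 0 then 1 else M p / M (p - 1)

/-- Moderate growth `(mg)`. -/
def HasMG (M : ℕ → ℝ) : Prop :=
  ∃ C : ℝ, 1 ≤ C ∧ ∀ p q : ℕ, M (p + q) ≤ C ^ (p + q) * M p * M q

/-- `m_p := M_p / p!`. -/
noncomputable def mseq (M : ℕ → ℝ) (p : ℕ) : ℝ := M p / (Nat.factorial p)

/-- Young conjugate of `x ↦ ω_M(eˣ)`. -/
noncomputable def phiStar (M : ℕ → ℝ) (y : ℝ) : ℝ :=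
  sSup ((fun x => x * y - omegaM M (Real.exp x)) '' Set.Ici (0 : ℝ))

/-- The weight matrix associated with `ω_M`: `M^{(l)}_p := exp((1/l)·φ*(l·p))`. -/
noncomputable def MMat (M : ℕ → ℝ) (l : ℝ) (p : ℕ) : ℝ :=
  Real.exp ((1 / l) * phiStar M (l * p))

/-- `m^{(l)}_p := M^{(l)}_p / p!`. -/
noncomputable def mMat (M : ℕ → ℝ) (l : ℝ) (p : ℕ) : ℝ :=
  MMat M l p / (Nat.factorial p)

/-- The Roumieu root-almost-increasing condition `(M_{rai})` for the weight matrix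
associated with `ω_M`. -/
def MRai (M : ℕ → ℝ) : Prop :=
  ∀ x : ℝ, 0 < x → ∃ C : ℝ, 0 < C ∧ ∃ y : ℝ, 0 < y ∧
    ∀ p q : ℕ, 1 ≤ p → p ≤ q →
      (mMat M x p) ^ (1 / (p : ℝ)) ≤ C * (mMat M y q) ^ (1 / (q : ℝ))

/-- `M ≼ N` : `sup_{p ≥ 1} (M_p/N_p)^{1/p} < ∞`. -/
def Precsim (M N : ℕ → ℝ) : Prop :=
  ∃ A : ℝ, ∀ p : ℕ, 1 ≤ p → (M p / N p) ^ (1 / (p : ℝ)) ≤ A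

/-- `M ≈ N` : mutual `≼`. -/
def Approx (M N : ℕ → ℝ) : Prop := Precsim M N ∧ Precsim N M

/-- Condition `(ω1)` for a weight function. -/
def Omega1 (w : ℝ → ℝ) : Prop :=
  ∃ L : ℝ, 1 ≤ L ∧ ∀ t : ℝ, 0 ≤ t → w (2 * t) ≤ L * (w t + 1)

/-- Condition `(α0)` (in the rewritten form valid for all `t ≥ 0`). -/
def Alpha0 (w : ℝ → ℝ) : Prop :=
  ∃ C : ℝ, 1 ≤ C ∧ ∃ D : ℝ, 1 ≤ D ∧ ∀ lam : ℝ, 1 ≤ lam → ∀ t : ℝ, 0 ≤ t →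
    w (lam * t) ≤ C * lam * w t + D * lam

/-!
`M ≈ N` means `M_p ≤ A^p N_p` and `N_p ≤ B^p M_p` for `p ≥ 1`, which translates into
`ω_N(t) ≤ ω_M(A t)` and `ω_M(t) ≤ ω_N(B t)`. Condition `(α0)` turns such a dilation of the
argument into a multiplicative constant: it passes from `ω_M` to `ω_N` by writing
`λ t = (A B λ)(t / B)`, and it bounds `ω_M(t) ≤ ω_N(B t)` by a multiple of `ω_N(t)` once
`ω_N(t) ≥ 1`.
-/

lemma Precsim.exists_le_pow_mul {M N : ℕ → ℝ} (hM : ∀ p, 0 < M p) (hN : ∀ p, 0 < N p)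
    (h : Precsim M N) : ∃ A, 1 ≤ A ∧ ∀ p, 1 ≤ p → M p ≤ A ^ p * N p := by
  obtain ⟨A, hA⟩ := h
  refine ⟨max A 1, le_max_right _ _, fun p hp => ?_⟩
  have hp0 : p ≠ 0 := by omega
  have hq : 0 ≤ M p / N p := (div_pos (hM p) (hN p)).le
  have hroot : (M p / N p) ^ ((p : ℝ)⁻¹) ≤ max A 1 := by
    simpa only [one_div] using (hA p hp).trans (le_max_left _ _)
  have := pow_le_pow_left₀ (by positivity) hroot p
  rwa [Real.rpow_inv_natCast_pow hq hp0, div_le_iff₀ (hN p)] at this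

lemma bddAbove_range_log_pow_div {M : ℕ → ℝ} (hpos : ∀ p, 0 < M p)
    (htend : Tendsto (fun p : ℕ => M p ^ (1 / (p : ℝ))) atTop atTop) {t : ℝ} (ht : 0 < t) :
    BddAbove (Set.range fun p : ℕ => Real.log (t ^ p / M p)) := by
  refine (isBoundedUnder_of_eventually_le (a := 0) ?_).bddAbove_range
  filter_upwards [htend.eventually_ge_atTop t, eventually_ne_atTop 0] with p hroot hp0
  have hle : t ^ p ≤ M p := by
    have := pow_le_pow_left₀ ht.le hroot p
    rwa [one_div, Real.rpow_inv_natCast_pow (hpos p).le hp0] at this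
  exact Real.log_nonpos (by have := hpos p; positivity) ((div_le_one (hpos p)).mpr hle)

namespace IsLC

variable {M : ℕ → ℝ} (hM : IsLC M)
include hM

lemma log_pow_div_le_omegaM {t : ℝ} (ht : 0 < t) (p : ℕ) :
    Real.log (t ^ p / M p) ≤ omegaM M t := by
  rw [omegaM, if_neg ht.ne']
  exact le_ciSup (bddAbove_range_log_pow_div hM.1 hM.2.2.2.2 ht) p

lemma omegaM_nonneg {t : ℝ} (ht : 0 ≤ t) : 0 ≤ omegaM M t := by
  rcases ht.eq_or_lt with rfl | ht
  · simp [omegaM]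
  · simpa [hM.2.1] using hM.log_pow_div_le_omegaM ht 0

lemma tendsto_omegaM_atTop : Tendsto (omegaM M) atTop atTop := by
  refine tendsto_atTop_mono' atTop ?_
    (tendsto_atTop_add_const_right atTop (-Real.log (M 1)) Real.tendsto_log_atTop)
  filter_upwards [eventually_gt_atTop 0] with t ht
  simpa [Real.log_div ht.ne' (hM.1 1).ne', sub_eq_add_neg] using hM.log_pow_div_le_omegaM ht 1

lemma omegaM_le_omegaM_mul {N : ℕ → ℝ} (hN : IsLC N) {A : ℝ} (hA : 1 ≤ A)
    (hMN : ∀ p, 1 ≤ p → M p ≤ A ^ p * N p) {t : ℝ} (ht : 0 ≤ t) :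
    omegaM N t ≤ omegaM M (A * t) := by
  rcases ht.eq_or_lt with rfl | ht
  · simp [omegaM]
  have hAt : 0 < A * t := by positivity
  rw [omegaM, if_neg ht.ne']
  refine ciSup_le fun p => ?_
  rcases Nat.eq_zero_or_pos p with rfl | hp
  · simpa [hN.2.1] using hM.omegaM_nonneg hAt.le
  have hquot : t ^ p / N p ≤ (A * t) ^ p / M p := by
    rw [div_le_div_iff₀ (hN.1 p) (hM.1 p)]
    calc t ^ p * M p ≤ t ^ p * (A ^ p * N p) := by gcongr; exact hMN p hp
      _ = (A * t) ^ p * N p := by ring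
  calc Real.log (t ^ p / N p) ≤ Real.log ((A * t) ^ p / M p) :=
        Real.log_le_log (div_pos (by positivity) (hN.1 p)) hquot
    _ ≤ omegaM M (A * t) := hM.log_pow_div_le_omegaM hAt p

end IsLC

namespace Alpha0

variable {w v : ℝ → ℝ}

lemma of_le_comp_mul (hw : Alpha0 w) {A B : ℝ} (hA : 1 ≤ A) (hB : 1 ≤ B)
    (hvw : ∀ t, 0 ≤ t → v t ≤ w (A * t)) (hwv : ∀ t, 0 ≤ t → w t ≤ v (B * t)) :
    Alpha0 v := by
  obtain ⟨C, hC, D, hD, hCD⟩ := hw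
  have one_le_mul₃ {a b c : ℝ} (ha : 1 ≤ a) (hb : 1 ≤ b) (hc : 1 ≤ c) : 1 ≤ a * b * c :=
    one_le_mul_of_one_le_of_one_le (one_le_mul_of_one_le_of_one_le ha hb) hc
  refine ⟨C * A * B, one_le_mul₃ hC hA hB, D * A * B, one_le_mul₃ hD hA hB,
    fun lam hlam t ht => ?_⟩
  have hB0 : 0 < B := by linarith
  have hABlam : 1 ≤ A * B * lam := one_le_mul₃ hA hB hlam
  calc v (lam * t) ≤ w ((A * B * lam) * (t / B)) := by
        convert hvw (lam * t) (by positivity) using 2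
        field_simp
    _ ≤ C * (A * B * lam) * w (t / B) + D * (A * B * lam) := hCD _ hABlam _ (by positivity)
    _ ≤ C * (A * B * lam) * v t + D * (A * B * lam) := by
        gcongr
        simpa [mul_div_cancel₀ t hB0.ne'] using hwv (t / B) (by positivity)
    _ = C * A * B * lam * v t + D * A * B * lam := by ring

lemma isBigO_of_le_comp_mul (hv : Alpha0 v) (hv_top : Tendsto v atTop atTop)
    (hw_nonneg : ∀ t, 0 ≤ t → 0 ≤ w t) {K : ℝ} (hK : 1 ≤ K)
    (hwv : ∀ t, 0 ≤ t → w t ≤ v (K * t)) : w =O[atTop] v := by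
  obtain ⟨C, -, D, hD, hCD⟩ := hv
  refine IsBigO.of_bound (C * K + D * K) ?_
  filter_upwards [eventually_ge_atTop 0, hv_top.eventually_ge_atTop 1] with t ht hvt
  rw [Real.norm_of_nonneg (hw_nonneg t ht), Real.norm_of_nonneg (by linarith)]
  have hDK : 0 ≤ D * K := by positivity
  calc w t ≤ C * K * v t + D * K := (hwv t ht).trans (hCD K hK t ht)
    _ ≤ (C * K + D * K) * v t := by nlinarith

end Alpha0

/-- Corollary 4.8: `(α0)` is preserved under `≈`, and then `ω_M ∼ ω_N`. -/
theorem stmt16 (M N : ℕ → ℝ) (hM : IsLC M) (hN : IsLC N) (hMN : Approx M N)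
    (h : Alpha0 (omegaM M)) :
    Alpha0 (omegaM N) ∧
    (omegaM M =O[Filter.atTop] omegaM N) ∧
    (omegaM N =O[Filter.atTop] omegaM M) := by
  obtain ⟨A, hA, hMN_le⟩ := hMN.1.exists_le_pow_mul hM.1 hN.1
  obtain ⟨B, hB, hNM_le⟩ := hMN.2.exists_le_pow_mul hN.1 hM.1
  have hN_le : ∀ t, 0 ≤ t → omegaM N t ≤ omegaM M (A * t) :=
    fun t => hM.omegaM_le_omegaM_mul hN hA hMN_le
  have hM_le : ∀ t, 0 ≤ t → omegaM M t ≤ omegaM N (B * t) :=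
    fun t => hN.omegaM_le_omegaM_mul hM hB hNM_le
  have hαN : Alpha0 (omegaM N) := h.of_le_comp_mul hA hB hN_le hM_le
  exact ⟨hαN,
    hαN.isBigO_of_le_comp_mul hN.tendsto_omegaM_atTop (fun _ => hM.omegaM_nonneg) hB hM_le,
    h.isBigO_of_le_comp_mul hM.tendsto_omegaM_atTop (fun _ => hN.omegaM_nonneg) hA hN_le⟩
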